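/- Suppose all entries of M^N are positive for some N ≥ 1 (so the subshift is mixing). Let A : X → GL(d,ℝ) be β-Hölder (‖A(x) − A(y)‖ ≤ c₀ d(x,y)^β for all x,y, for some c₀ > 0, β ∈ (0,1]), and assume the sub-exponential growth condition: for every ε > 0 there is K_ε ≥ 1 with ‖𝒜ⁿ_x‖ ≤ K_ε e^{ε|n|} and ‖(𝒜ⁿ_x)^{−1}‖ ≤ K_ε e^{ε|n|} for all x ∈ X and n ∈ ℤ. If the periodic data is bounded, i.e. there is C₀ such that ‖𝒜ᵏ_p‖ ≤ C₀ and ‖(𝒜ᵏ_p)^{−1}‖ ≤ C₀ for every p ∈ X and k ≥ 1 with fᵏp = p, then the set of all values of the cocycle is bounded: there is C such that ‖𝒜ⁿ_x‖ ≤ C and ‖(𝒜ⁿ_x)^{−1}‖ ≤ C for all x ∈ X and n ∈ ℤ. -/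

import Mathlib

open scoped Classical

/-- The subshift of finite type determined by a 0-1 transition matrix `M`:
the set of two-sided sequences all of whose transitions are allowed by `M`. -/
def SFT {k : ℕ} (M : Matrix (Fin k) (Fin k) ℕ) : Set (ℤ → Fin k) :=
  {x | ∀ n : ℤ, M (x n) (x (n + 1)) = 1}

/-- The (left) shift map `(f x)_n = x_{n+1}`. -/
def shift {k : ℕ} (x : ℤ → Fin k) : ℤ → Fin k := fun n => x (n + 1)

/-- `sep x y = min {|i| : x_i ≠ y_i}` (defined for `x ≠ y`). -/
noncomputable def sep {k : ℕ} (x y : ℤ → Fin k) : ℕ :=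
  sInf {m : ℕ | ∃ i : ℤ, i.natAbs = m ∧ x i ≠ y i}

/-- The distance `d(x,y) = λ^{sep x y}` for `x ≠ y`, and `d(x,x) = 0`. -/
noncomputable def dSFT {k : ℕ} (lam : ℝ) (x y : ℤ → Fin k) : ℝ :=
  if x = y then 0 else lam ^ sep x y

open scoped MatrixGroups Matrix.Norms.L2Operator

/-- The `GL(d,ℝ)`-valued cocycle generated by `A` over the shift:
`𝒜⁰_x = I` and `𝒜ⁿ⁺¹_x = A(fⁿx) · 𝒜ⁿ_x`. -/
def coc {k d : ℕ} (A : (ℤ → Fin k) → GL (Fin d) ℝ) :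
    (ℤ → Fin k) → ℕ → GL (Fin d) ℝ
  | _, 0 => 1
  | x, n + 1 => A (shift^[n] x) * coc A x n

/-- The inverse shift map `(f⁻¹ x)_n = x_{n-1}`. -/
def shiftInv {k : ℕ} (x : ℤ → Fin k) : ℤ → Fin k := fun n => x (n - 1)

/-- The extension of the cocycle to `ℤ`: `𝒜⁻ⁿ_x = (𝒜ⁿ_{f⁻ⁿx})⁻¹`. -/
def cocZ {k d : ℕ} (A : (ℤ → Fin k) → GL (Fin d) ℝ) (x : ℤ → Fin k) (n : ℤ) :
    GL (Fin d) ℝ :=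
  if 0 ≤ n then coc A x n.toNat else (coc A (shiftInv^[(-n).toNat] x) (-n).toNat)⁻¹

/-!
Given `x` and `n`, mixing closes the orbit segment `x₀ … xₙ` by a path of length `N` into a
periodic point `p` of period `n + N`; let `z` have the future of `x` and the past of `p`. Then
`𝒜ⁿ_x = (𝒜ⁿ_z (𝒜ⁿ_p)⁻¹) 𝒜ⁿ_p ((𝒜ⁿ_z)⁻¹ 𝒜ⁿ_x)`, and the middle factor is bounded by the periodic
data because `𝒜ⁿ_p = (𝒜ᴺ_{fⁿp})⁻¹ 𝒜ⁿ⁺ᴺ_p`. The outer factors are holonomies along the stable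
pair `x, z` and the unstable pair `z, p`: telescoping writes each as `1` plus a sum whose `j`-th
term is at most `K³ c E (E² Λ)ʲ`, where `K Eʲ` bounds the cocycle and its inverse
(sub-exponential growth, `E = e^ε`) and `c Λʲ` bounds the Hölder error. Choosing `ε` with
`E² Λ < 1` makes these sums uniformly bounded.
-/

open Finset

theorem sum_range_mul_pow_le {B q : ℝ} (hB : 0 ≤ B) (hq0 : 0 ≤ q) (hq : q < 1) (n : ℕ) :
    ∑ j ∈ range n, B * q ^ j ≤ B * (1 - q)⁻¹ := by
  rw [← mul_sum]
  gcongr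
  have hgeom := geom_sum_Ico_le_of_lt_one (m := 0) (n := n) hq0 hq
  rwa [← range_eq_Ico, pow_zero, one_div] at hgeom

section Telescope
variable {R : Type*} [SeminormedRing R]

theorem norm_inv_mul_le_of_telescope {a b P Q : ℕ → Rˣ} (hP0 : P 0 = 1) (hQ0 : Q 0 = 1)
    (hP : ∀ j, P (j + 1) = a j * P j) (hQ : ∀ j, Q (j + 1) = b j * Q j) (n : ℕ) :
    ‖((Q n)⁻¹ * P n).val‖ ≤ ‖(1 : R)‖ +
      ∑ j ∈ range n, ‖((Q j)⁻¹).val * ((b j)⁻¹).val * (a j - b j) * P j‖ := by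
  set g : ℕ → R := fun j => ((Q j)⁻¹ * P j).val
  have hstep : ∀ j, g (j + 1) - g j = ((Q j)⁻¹).val * ((b j)⁻¹).val * (a j - b j) * P j := by
    intro j
    simp only [g, hP, hQ, mul_inv_rev, Units.val_mul, mul_sub, sub_mul, mul_assoc,
      Units.inv_mul_cancel_left]
  have hg0 : g 0 = 1 := by simp [g, hP0, hQ0]
  calc ‖g n‖ = ‖g 0 + ∑ j ∈ range n, (g (j + 1) - g j)‖ := by rw [sum_range_sub, add_sub_cancel]
    _ ≤ ‖g 0‖ + ∑ j ∈ range n, ‖g (j + 1) - g j‖ :=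
      (norm_add_le _ _).trans (add_le_add_right (norm_sum_le _ _) _)
    _ = _ := by simp only [hg0, hstep]

theorem norm_mul_inv_le_of_telescope {a b S T : ℕ → Rˣ} {n : ℕ} (hSn : S n = 1) (hTn : T n = 1)
    (hS : ∀ j < n, S j = S (j + 1) * a j) (hT : ∀ j < n, T j = T (j + 1) * b j) :
    ‖(S 0 * (T 0)⁻¹).val‖ ≤ ‖(1 : R)‖ +
      ∑ j ∈ range n, ‖(S (j + 1)).val * (a j - b j) * ((b j)⁻¹).val * ((T (j + 1))⁻¹).val‖ := by
  set h : ℕ → R := fun j => (S j * (T j)⁻¹).val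
  have hstep : ∀ j < n, h j - h (j + 1) =
      (S (j + 1)).val * (a j - b j) * ((b j)⁻¹).val * ((T (j + 1))⁻¹).val := by
    intro j hj
    simp only [h, hS j hj, hT j hj, mul_inv_rev, Units.val_mul, mul_sub, sub_mul, mul_assoc,
      Units.mul_inv_cancel_left]
  have hhn : h n = 1 := by simp [h, hSn, hTn]
  calc ‖h 0‖ = ‖h n + ∑ j ∈ range n, (h j - h (j + 1))‖ := by rw [sum_range_sub', add_sub_cancel]
    _ ≤ ‖h n‖ + ∑ j ∈ range n, ‖h j - h (j + 1)‖ :=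
      (norm_add_le _ _).trans (add_le_add_right (norm_sum_le _ _) _)
    _ = _ := by
      rw [hhn]
      exact congrArg _ (sum_congr rfl fun j hj => by rw [hstep j (mem_range.mp hj)])

end Telescope

section Shift
variable {k : ℕ}

theorem shift_iterate_apply (x : ℤ → Fin k) (a : ℕ) (i : ℤ) : shift^[a] x i = x (i + a) := by
  induction a generalizing x with
  | zero => simp
  | succ a ih =>
    rw [Function.iterate_succ_apply, ih]
    simp only [shift, Nat.cast_succ, add_assoc]

theorem shiftInv_iterate_apply (x : ℤ → Fin k) (a : ℕ) (i : ℤ) :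
    shiftInv^[a] x i = x (i - a) := by
  induction a generalizing x with
  | zero => simp
  | succ a ih =>
    rw [Function.iterate_succ_apply, ih]
    simp only [shiftInv, Nat.cast_succ, sub_sub]

theorem shift_iterate_mem_SFT {M : Matrix (Fin k) (Fin k) ℕ} {x : ℤ → Fin k} (hx : x ∈ SFT M)
    (a : ℕ) : shift^[a] x ∈ SFT M := fun n => by
  simpa only [shift_iterate_apply, add_right_comm] using hx (n + a)

theorem shiftInv_iterate_mem_SFT {M : Matrix (Fin k) (Fin k) ℕ} {x : ℤ → Fin k} (hx : x ∈ SFT M)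
    (a : ℕ) : shiftInv^[a] x ∈ SFT M := fun n => by
  simpa only [shiftInv_iterate_apply, sub_add_eq_add_sub] using hx (n - a)

end Shift

section Cocycle
variable {k d : ℕ} (A : (ℤ → Fin k) → GL (Fin d) ℝ)

theorem coc_one (x : ℤ → Fin k) : coc A x 1 = A x := mul_one _

theorem coc_succ' (x : ℤ → Fin k) (n : ℕ) : coc A x (n + 1) = coc A (shift x) n * A x := by
  induction n generalizing x with
  | zero => simp [coc]
  | succ n ih =>
    rw [coc, ih, coc, Function.iterate_succ_apply, mul_assoc]

theorem coc_add (x : ℤ → Fin k) (a b : ℕ) :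
    coc A x (a + b) = coc A (shift^[a] x) b * coc A x a := by
  induction b with
  | zero => simp [coc]
  | succ b ih =>
    rw [← add_assoc, coc, ih, coc, ← mul_assoc, ← Function.iterate_add_apply, add_comm b]

theorem cocZ_natCast (x : ℤ → Fin k) (n : ℕ) : cocZ A x n = coc A x n := by
  simp [cocZ]

end Cocycle

theorem dSFT_nonneg {k : ℕ} {lam : ℝ} (h0 : 0 ≤ lam) (x y : ℤ → Fin k) : 0 ≤ dSFT lam x y := by
  unfold dSFT
  split_ifs
  exacts [le_rfl, pow_nonneg h0 _]

theorem dSFT_le_pow {k : ℕ} {lam : ℝ} (h0 : 0 ≤ lam) (h1 : lam ≤ 1) {x y : ℤ → Fin k} {j : ℕ}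
    (h : ∀ i : ℤ, i.natAbs < j → x i = y i) : dSFT lam x y ≤ lam ^ j := by
  unfold dSFT
  split_ifs with hxy
  · exact pow_nonneg h0 _
  obtain ⟨i₀, hi₀⟩ := Function.ne_iff.mp hxy
  refine pow_le_pow_of_le_one h0 h1 (le_csInf ⟨_, i₀, rfl, hi₀⟩ ?_)
  rintro _ ⟨i, rfl, hi⟩
  by_contra hlt
  exact hi (h i (not_le.mp hlt))

theorem Matrix.exists_path_of_pow_apply_ne_zero {ι R : Type*} [Fintype ι] [DecidableEq ι]
    [Semiring R] {M : Matrix ι ι R} {s : ℕ} {i j : ι} (h : (M ^ s) i j ≠ 0) :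
    ∃ w : ℕ → ι, w 0 = i ∧ w s = j ∧ ∀ t < s, M (w t) (w (t + 1)) ≠ 0 := by
  induction s generalizing j with
  | zero =>
    obtain rfl : i = j := by
      by_contra hij
      exact h (by rw [pow_zero, Matrix.one_apply_ne hij])
    exact ⟨fun _ => i, rfl, rfl, fun t ht => absurd ht t.not_lt_zero⟩
  | succ s ih =>
    rw [pow_succ, Matrix.mul_apply] at h
    obtain ⟨l, -, hl⟩ := Finset.exists_ne_zero_of_sum_ne_zero h
    obtain ⟨w, hw0, hws, hw⟩ := ih (left_ne_zero_of_mul hl)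
    refine ⟨fun t => if t ≤ s then w t else j, by simpa using hw0, by simp, fun t ht => ?_⟩
    rcases Nat.lt_succ_iff_lt_or_eq.mp ht with ht | rfl
    · simpa [ht.le, Nat.succ_le_of_lt ht] using hw t ht
    · simpa [hws] using right_ne_zero_of_mul hl

section Closing
variable {k : ℕ} {M : Matrix (Fin k) (Fin k) ℕ}

def periodize (c : ℤ → Fin k) (m : ℤ) : ℤ → Fin k := fun i => c (i % m)

theorem periodize_mem_SFT {c : ℤ → Fin k} {m : ℤ} (hm : 0 < m) (hcm : c m = c 0)
    (hc : ∀ r, 0 ≤ r → r < m → M (c r) (c (r + 1)) = 1) : periodize c m ∈ SFT M := by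
  intro i
  have h0 : 0 ≤ i % m := Int.emod_nonneg i hm.ne'
  have h1 : i % m < m := Int.emod_lt_of_pos i hm
  show M (c (i % m)) (c ((i + 1) % m)) = 1
  rw [← Int.emod_add_emod]
  rcases (Int.add_one_le_of_lt h1).lt_or_eq with hlt | heq
  · rw [Int.emod_eq_of_lt (by omega) hlt]
    exact hc _ h0 h1
  · rw [heq, Int.emod_self, ← hcm]
    simpa only [heq] using hc _ h0 h1

theorem shift_iterate_periodize (c : ℤ → Fin k) (m : ℕ) :
    shift^[m] (periodize c m) = periodize c m := by
  funext i
  simp [shift_iterate_apply, periodize]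

theorem periodize_apply (c : ℤ → Fin k) {m i : ℤ} (h0 : 0 ≤ i) (hi : i < m) :
    periodize c m i = c i := by
  rw [periodize, Int.emod_eq_of_lt h0 hi]

theorem exists_periodic_eqOn_Icc (hM : ∀ i j, M i j = 0 ∨ M i j = 1) {N : ℕ} (hN : 1 ≤ N)
    (hmix : ∀ i j, 0 < (M ^ N) i j) {x : ℤ → Fin k} (hx : x ∈ SFT M) (n : ℕ) :
    ∃ p ∈ SFT M, shift^[n + N] p = p ∧ ∀ i : ℤ, 0 ≤ i → i ≤ n → p i = x i := by
  obtain ⟨w, hw0, hwN, hw⟩ :=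
    Matrix.exists_path_of_pow_apply_ne_zero (hmix (x n) (x 0)).ne'
  have hwM : ∀ t < N, M (w t) (w (t + 1)) = 1 := fun t ht => (hM _ _).resolve_left (hw t ht)
  -- the orbit segment `x₀ … xₙ` followed by the path `w` back to `x₀`
  let c : ℤ → Fin k := fun r => if r ≤ n then x r else w (r - n).toNat
  have hc : ∀ r : ℤ, 0 ≤ r → r < ((n + N : ℕ) : ℤ) → M (c r) (c (r + 1)) = 1 := by
    intro r h0 hr
    by_cases hrn : r + 1 ≤ n
    · simpa [c, hrn, (by omega : r ≤ n)] using hx r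
    by_cases hr' : r = n
    · subst hr'
      simpa [c, hw0] using hwM 0 hN
    · have hsucc : (r + 1 - n).toNat = (r - n).toNat + 1 := by omega
      simp only [c, if_neg hrn, if_neg (show ¬r ≤ n by omega), hsucc]
      exact hwM _ (by omega)
  refine ⟨periodize c (n + N : ℕ), periodize_mem_SFT (by omega) ?_ hc,
    shift_iterate_periodize c _, fun i h0 hi => ?_⟩
  · have : ((n + N : ℕ) - n : ℤ).toNat = N := by omega
    simp only [c, if_neg (show ¬((n + N : ℕ) : ℤ) ≤ n by omega), if_pos (show (0 : ℤ) ≤ n by omega),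
      this, hwN]
  · rw [periodize_apply c h0 (by omega)]
    simp [c, hi]

def splice (x y : ℤ → Fin k) : ℤ → Fin k := fun i => if 0 ≤ i then x i else y i

theorem splice_mem_SFT {x y : ℤ → Fin k} (hx : x ∈ SFT M) (hy : y ∈ SFT M) (h0 : x 0 = y 0) :
    splice x y ∈ SFT M := by
  intro i
  rcases lt_trichotomy i (-1) with hi | rfl | hi
  · simpa only [splice, if_neg (show ¬0 ≤ i by omega), if_neg (show ¬0 ≤ i + 1 by omega)]
      using hy i
  · simpa [splice, h0] using hy (-1)
  · simpa only [splice, if_pos (show 0 ≤ i by omega), if_pos (show 0 ≤ i + 1 by omega)]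
      using hx i

theorem splice_apply_of_nonneg (x y : ℤ → Fin k) {i : ℤ} (hi : 0 ≤ i) : splice x y i = x i :=
  if_pos hi

theorem splice_apply_of_le {x y : ℤ → Fin k} {n : ℤ} (hxy : ∀ i, 0 ≤ i → i ≤ n → x i = y i)
    {i : ℤ} (hi : i ≤ n) : splice x y i = y i := by
  unfold splice
  split_ifs with h0
  exacts [hxy i h0 hi, rfl]

end Closing

section Holonomy
variable {k d : ℕ}

def CocGrowthWith (M : Matrix (Fin k) (Fin k) ℕ) (A : (ℤ → Fin k) → GL (Fin d) ℝ) (K E : ℝ) :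
    Prop :=
  ∀ y ∈ SFT M, ∀ j : ℕ, ‖(coc A y j).val‖ ≤ K * E ^ j ∧ ‖((coc A y j)⁻¹).val‖ ≤ K * E ^ j

def HolderDecayWith (M : Matrix (Fin k) (Fin k) ℕ) (A : (ℤ → Fin k) → GL (Fin d) ℝ) (c Λ : ℝ) :
    Prop :=
  ∀ u ∈ SFT M, ∀ v ∈ SFT M, ∀ j : ℕ, (∀ i : ℤ, i.natAbs < j → u i = v i) →
    ‖(A u).val - (A v).val‖ ≤ c * Λ ^ j

variable {M : Matrix (Fin k) (Fin k) ℕ} {A : (ℤ → Fin k) → GL (Fin d) ℝ} {K E c Λ : ℝ}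

theorem CocGrowthWith.norm_inv_le (hG : CocGrowthWith M A K E) {y : ℤ → Fin k} (hy : y ∈ SFT M) :
    ‖((A y)⁻¹).val‖ ≤ K * E := by
  simpa only [coc_one, pow_one] using (hG y hy 1).2

theorem norm_coc_inv_mul_coc_le (hG : CocGrowthWith M A K E) (hH : HolderDecayWith M A c Λ)
    {x z : ℤ → Fin k} (hx : x ∈ SFT M) (hz : z ∈ SFT M) (hxz : ∀ i : ℤ, 0 ≤ i → x i = z i)
    (n : ℕ) :
    ‖((coc A z n)⁻¹ * coc A x n).val‖ ≤
      ‖(1 : Matrix (Fin d) (Fin d) ℝ)‖ + ∑ j ∈ range n, K ^ 3 * c * E * (E ^ 2 * Λ) ^ j := by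
  refine (norm_inv_mul_le_of_telescope (a := fun j => A (shift^[j] x))
    (b := fun j => A (shift^[j] z)) rfl rfl (fun _ => rfl) (fun _ => rfl) n).trans ?_
  gcongr with j
  have hagree : ∀ i : ℤ, i.natAbs < j → shift^[j] x i = shift^[j] z i := fun i hi => by
    simp only [shift_iterate_apply]
    exact hxz _ (by omega)
  calc _ ≤ K * E ^ j * (K * E) * (c * Λ ^ j) * (K * E ^ j) :=
        norm_mul_le_of_le (norm_mul_le_of_le (norm_mul_le_of_le (hG z hz j).2
          (hG.norm_inv_le (shift_iterate_mem_SFT hz j)))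
          (hH _ (shift_iterate_mem_SFT hx j) _ (shift_iterate_mem_SFT hz j) j hagree))
          (hG x hx j).1
    _ = _ := by ring

theorem norm_coc_mul_inv_coc_le (hG : CocGrowthWith M A K E) (hH : HolderDecayWith M A c Λ)
    {z p : ℤ → Fin k} (hz : z ∈ SFT M) (hp : p ∈ SFT M) {n : ℕ}
    (hzp : ∀ i : ℤ, i ≤ n → z i = p i) :
    ‖(coc A z n * (coc A p n)⁻¹).val‖ ≤
      ‖(1 : Matrix (Fin d) (Fin d) ℝ)‖ + ∑ j ∈ range n, K ^ 3 * c * E * (E ^ 2 * Λ) ^ j := by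
  have htail : ∀ y : ℤ → Fin k, ∀ j < n,
      coc A (shift^[j] y) (n - j) = coc A (shift^[j + 1] y) (n - (j + 1)) * A (shift^[j] y) := by
    intro y j hj
    rw [show n - j = n - (j + 1) + 1 by omega, coc_succ', Function.iterate_succ_apply']
  refine (norm_mul_inv_le_of_telescope (S := fun j => coc A (shift^[j] z) (n - j))
    (T := fun j => coc A (shift^[j] p) (n - j)) (by simp [coc]) (by simp [coc])
    (htail z) (htail p)).trans ?_
  rw [← sum_range_reflect (fun j => K ^ 3 * c * E * (E ^ 2 * Λ) ^ j) n]
  gcongr with j hj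
  have hj := mem_range.mp hj
  set m := n - (j + 1)
  have hagree : ∀ i : ℤ, i.natAbs < m → shift^[j] z i = shift^[j] p i := fun i hi => by
    simp only [shift_iterate_apply]
    exact hzp _ (by omega)
  calc _ ≤ K * E ^ m * (c * Λ ^ m) * (K * E) * (K * E ^ m) :=
        norm_mul_le_of_le (norm_mul_le_of_le (norm_mul_le_of_le
          (hG _ (shift_iterate_mem_SFT hz _) m).1
          (hH _ (shift_iterate_mem_SFT hz j) _ (shift_iterate_mem_SFT hp j) m hagree))
          (hG.norm_inv_le (shift_iterate_mem_SFT hp j)))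
          (hG _ (shift_iterate_mem_SFT hp _) m).2
    _ = _ := by rw [show n - 1 - j = m by omega]; ring

end Holonomy

section Bounds
variable {k d : ℕ} {M : Matrix (Fin k) (Fin k) ℕ} {A : (ℤ → Fin k) → GL (Fin d) ℝ} {K E : ℝ}

theorem norm_coc_le_of_periodic (hG : CocGrowthWith M A K E) {C₀ : ℝ}
    (hper : ∀ p ∈ SFT M, ∀ m : ℕ, 1 ≤ m → shift^[m] p = p →
      ‖(coc A p m).val‖ ≤ C₀ ∧ ‖((coc A p m)⁻¹).val‖ ≤ C₀)
    {p : ℤ → Fin k} (hp : p ∈ SFT M) {n N : ℕ} (hN : 1 ≤ N) (hperiod : shift^[n + N] p = p) :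
    ‖(coc A p n).val‖ ≤ K * E ^ N * C₀ ∧ ‖((coc A p n)⁻¹).val‖ ≤ K * E ^ N * C₀ := by
  have hsplit : coc A p n = (coc A (shift^[n] p) N)⁻¹ * coc A p (n + N) := by
    rw [coc_add, inv_mul_cancel_left]
  obtain ⟨hper₁, hper₂⟩ := hper p hp (n + N) (by omega) hperiod
  obtain ⟨hG₁, hG₂⟩ := hG _ (shift_iterate_mem_SFT hp n) N
  rw [hsplit, mul_inv_rev, inv_inv, Units.val_mul, Units.val_mul]
  exact ⟨norm_mul_le_of_le hG₂ hper₁, mul_comm (K * E ^ N) C₀ ▸ norm_mul_le_of_le hper₂ hG₁⟩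

theorem exists_bound_coc_of_periodic (hM : ∀ i j, M i j = 0 ∨ M i j = 1) {N : ℕ} (hN : 1 ≤ N)
    (hmix : ∀ i j, 0 < (M ^ N) i j) {c Λ : ℝ} (hG : CocGrowthWith M A K E)
    (hH : HolderDecayWith M A c Λ) (hK : 0 ≤ K) (hE : 0 ≤ E) (hc : 0 ≤ c) (hΛ : 0 ≤ Λ)
    (hq : E ^ 2 * Λ < 1) {C₀ : ℝ}
    (hper : ∀ p ∈ SFT M, ∀ m : ℕ, 1 ≤ m → shift^[m] p = p →
      ‖(coc A p m).val‖ ≤ C₀ ∧ ‖((coc A p m)⁻¹).val‖ ≤ C₀) :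
    ∃ D, ∀ x ∈ SFT M, ∀ n : ℕ, ‖(coc A x n).val‖ ≤ D ∧ ‖((coc A x n)⁻¹).val‖ ≤ D := by
  set H := ‖(1 : Matrix (Fin d) (Fin d) ℝ)‖ + K ^ 3 * c * E * (1 - E ^ 2 * Λ)⁻¹
  have hsum (n : ℕ) : ‖(1 : Matrix (Fin d) (Fin d) ℝ)‖ +
      ∑ j ∈ range n, K ^ 3 * c * E * (E ^ 2 * Λ) ^ j ≤ H :=
    add_le_add_right (sum_range_mul_pow_le (by positivity) (by positivity) hq n) _
  refine ⟨H * (K * E ^ N * C₀) * H, fun x hx n => ?_⟩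
  obtain ⟨p, hp, hperiod, hpx⟩ := exists_periodic_eqOn_Icc hM hN hmix hx n
  have hpx' : ∀ i : ℤ, 0 ≤ i → i ≤ n → x i = p i := fun i h0 hi => (hpx i h0 hi).symm
  set z := splice x p
  have hz : z ∈ SFT M := splice_mem_SFT hx hp (hpx' 0 le_rfl (by omega))
  have hxz (i : ℤ) (hi : 0 ≤ i) : x i = z i := (splice_apply_of_nonneg x p hi).symm
  have hzp (i : ℤ) (hi : i ≤ n) : z i = p i := splice_apply_of_le hpx' hi
  obtain ⟨hP, hPinv⟩ := norm_coc_le_of_periodic hG hper hp hN hperiod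
  have hstable := (norm_coc_inv_mul_coc_le hG hH hx hz hxz n).trans (hsum n)
  have hstable' :=
    (norm_coc_inv_mul_coc_le hG hH hz hx (fun i hi => (hxz i hi).symm) n).trans (hsum n)
  have hunstable := (norm_coc_mul_inv_coc_le hG hH hz hp hzp).trans (hsum n)
  have hunstable' :=
    (norm_coc_mul_inv_coc_le hG hH hp hz (fun i hi => (hzp i hi).symm)).trans (hsum n)
  constructor
  · rw [show coc A x n =
        coc A z n * (coc A p n)⁻¹ * coc A p n * ((coc A z n)⁻¹ * coc A x n) by group,
      Units.val_mul, Units.val_mul]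
    exact norm_mul_le_of_le (norm_mul_le_of_le hunstable hP) hstable
  · rw [show (coc A x n)⁻¹ =
        (coc A x n)⁻¹ * coc A z n * (coc A p n)⁻¹ * (coc A p n * (coc A z n)⁻¹) by group,
      Units.val_mul, Units.val_mul]
    exact norm_mul_le_of_le (norm_mul_le_of_le hstable' hPinv) hunstable'

theorem cocGrowthWith_of_cocZ {K ε : ℝ}
    (h : ∀ x ∈ SFT M, ∀ n : ℤ, ‖(cocZ A x n).val‖ ≤ K * Real.exp (ε * n.natAbs) ∧
      ‖((cocZ A x n)⁻¹).val‖ ≤ K * Real.exp (ε * n.natAbs)) :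
    CocGrowthWith M A K (Real.exp ε) := fun y hy j => by
  simpa only [cocZ_natCast, Int.natAbs_natCast, mul_comm ε, Real.exp_nat_mul] using h y hy j

theorem holderDecayWith_of_holder {lam c β : ℝ} (h0 : 0 ≤ lam) (h1 : lam ≤ 1) (hc : 0 ≤ c)
    (hβ : 0 ≤ β)
    (hHolder : ∀ x ∈ SFT M, ∀ y ∈ SFT M, ‖(A x).val - (A y).val‖ ≤ c * dSFT lam x y ^ β) :
    HolderDecayWith M A c (lam ^ β) := fun u hu v hv j huv =>
  calc _ ≤ c * dSFT lam u v ^ β := hHolder u hu v hv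
    _ ≤ c * (lam ^ j) ^ β := by
      gcongr
      exacts [dSFT_nonneg h0 u v, dSFT_le_pow h0 h1 huv]
    _ = c * (lam ^ β) ^ j := by rw [Real.rpow_pow_comm h0]

theorem exists_pos_exp_sq_mul_lt_one {Λ : ℝ} (h0 : 0 < Λ) (h1 : Λ < 1) :
    ∃ ε > 0, Real.exp ε ^ 2 * Λ < 1 := by
  have hlog := Real.log_neg h0 h1
  refine ⟨-Real.log Λ / 4, by linarith, ?_⟩
  have hexp :
      Real.exp (2 * (-Real.log Λ / 4) + Real.log Λ) = Real.exp (-Real.log Λ / 4) ^ 2 * Λ := by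
    rw [Real.exp_add, Real.exp_log h0, ← Real.exp_nat_mul, Nat.cast_ofNat]
  rw [← hexp, Real.exp_lt_one_iff]
  linarith

theorem norm_cocZ_le_of_norm_coc_le {D : ℝ}
    (hD : ∀ x ∈ SFT M, ∀ n : ℕ, ‖(coc A x n).val‖ ≤ D ∧ ‖((coc A x n)⁻¹).val‖ ≤ D)
    {x : ℤ → Fin k} (hx : x ∈ SFT M) (n : ℤ) :
    ‖(cocZ A x n).val‖ ≤ D ∧ ‖((cocZ A x n)⁻¹).val‖ ≤ D := by
  rcases le_or_gt 0 n with hn | hn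
  · lift n to ℕ using hn
    rw [cocZ_natCast]
    exact hD x hx n
  · rw [cocZ, if_neg (not_le.mpr hn), inv_inv]
    exact (hD _ (shiftInv_iterate_mem_SFT hx _) _).symm

end Bounds

theorem stmt_11_general (k d : ℕ) (M : Matrix (Fin k) (Fin k) ℕ)
    (hM : ∀ i j, M i j = 0 ∨ M i j = 1)
    (N : ℕ) (hN : 1 ≤ N) (hmix : ∀ i j, 0 < (M ^ N) i j)
    (lam : ℝ) (hlam0 : 0 < lam) (hlam1 : lam < 1)
    (A : (ℤ → Fin k) → GL (Fin d) ℝ)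
    (c₀ β : ℝ) (hc₀ : 0 < c₀) (hβ0 : 0 < β)
    (hHolder : ∀ x ∈ SFT M, ∀ y ∈ SFT M,
      ‖(A x : Matrix (Fin d) (Fin d) ℝ) - (A y : Matrix (Fin d) (Fin d) ℝ)‖
        ≤ c₀ * dSFT lam x y ^ β)
    (hgrowth : ∀ ε : ℝ, 0 < ε → ∃ K : ℝ, 1 ≤ K ∧ ∀ x ∈ SFT M, ∀ n : ℤ,
      ‖(cocZ A x n : Matrix (Fin d) (Fin d) ℝ)‖ ≤ K * Real.exp (ε * n.natAbs) ∧
      ‖(((cocZ A x n)⁻¹ : GL (Fin d) ℝ) : Matrix (Fin d) (Fin d) ℝ)‖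
        ≤ K * Real.exp (ε * n.natAbs))
    (C₀ : ℝ)
    (hper : ∀ p ∈ SFT M, ∀ m : ℕ, 1 ≤ m → shift^[m] p = p →
      ‖(coc A p m : Matrix (Fin d) (Fin d) ℝ)‖ ≤ C₀ ∧
      ‖(((coc A p m)⁻¹ : GL (Fin d) ℝ) : Matrix (Fin d) (Fin d) ℝ)‖ ≤ C₀) :
    ∃ C : ℝ, ∀ x ∈ SFT M, ∀ n : ℤ,
      ‖(cocZ A x n : Matrix (Fin d) (Fin d) ℝ)‖ ≤ C ∧
      ‖(((cocZ A x n)⁻¹ : GL (Fin d) ℝ) : Matrix (Fin d) (Fin d) ℝ)‖ ≤ C := by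
  obtain ⟨ε, hε, hq⟩ := exists_pos_exp_sq_mul_lt_one (Real.rpow_pos_of_pos hlam0 β)
    (Real.rpow_lt_one hlam0.le hlam1 hβ0)
  obtain ⟨K, hK, hKε⟩ := hgrowth ε hε
  obtain ⟨D, hD⟩ := exists_bound_coc_of_periodic hM hN hmix (cocGrowthWith_of_cocZ hKε)
    (holderDecayWith_of_holder hlam0.le hlam1.le hc₀.le hβ0.le hHolder) (by linarith)
    (Real.exp_pos ε).le hc₀.le (Real.rpow_nonneg hlam0.le β) hq hper
  exact ⟨D, fun x hx n => norm_cocZ_le_of_norm_coc_le hD hx n⟩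

/-- Proposition 3.7 for linear cocycles: over a mixing subshift of finite type, a β-Hölder
`GL(d,ℝ)`-valued cocycle with sub-exponential growth whose periodic data is bounded has
a bounded set of values. -/
theorem stmt_11 (k d : ℕ) (hk : 1 ≤ k) (M : Matrix (Fin k) (Fin k) ℕ)
    (hM : ∀ i j, M i j = 0 ∨ M i j = 1)
    (N : ℕ) (hN : 1 ≤ N) (hmix : ∀ i j, 0 < (M ^ N) i j)
    (lam : ℝ) (hlam0 : 0 < lam) (hlam1 : lam < 1)
    (A : (ℤ → Fin k) → GL (Fin d) ℝ)
    (c₀ β : ℝ) (hc₀ : 0 < c₀) (hβ0 : 0 < β) (hβ1 : β ≤ 1)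
    (hHolder : ∀ x ∈ SFT M, ∀ y ∈ SFT M,
      ‖(A x : Matrix (Fin d) (Fin d) ℝ) - (A y : Matrix (Fin d) (Fin d) ℝ)‖
        ≤ c₀ * dSFT lam x y ^ β)
    (hgrowth : ∀ ε : ℝ, 0 < ε → ∃ K : ℝ, 1 ≤ K ∧ ∀ x ∈ SFT M, ∀ n : ℤ,
      ‖(cocZ A x n : Matrix (Fin d) (Fin d) ℝ)‖ ≤ K * Real.exp (ε * n.natAbs) ∧
      ‖(((cocZ A x n)⁻¹ : GL (Fin d) ℝ) : Matrix (Fin d) (Fin d) ℝ)‖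
        ≤ K * Real.exp (ε * n.natAbs))
    (C₀ : ℝ)
    (hper : ∀ p ∈ SFT M, ∀ m : ℕ, 1 ≤ m → shift^[m] p = p →
      ‖(coc A p m : Matrix (Fin d) (Fin d) ℝ)‖ ≤ C₀ ∧
      ‖(((coc A p m)⁻¹ : GL (Fin d) ℝ) : Matrix (Fin d) (Fin d) ℝ)‖ ≤ C₀) :
    ∃ C : ℝ, ∀ x ∈ SFT M, ∀ n : ℤ,
      ‖(cocZ A x n : Matrix (Fin d) (Fin d) ℝ)‖ ≤ C ∧
      ‖(((cocZ A x n)⁻¹ : GL (Fin d) ℝ) : Matrix (Fin d) (Fin d) ℝ)‖ ≤ C :=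
  stmt_11_general k d M hM N hN hmix lam hlam0 hlam1 A c₀ β hc₀ hβ0 hHolder hgrowth C₀ hper
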